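/- arXiv:math/0604519 — 3 statements merged into one kernel-verified Lean document; each statement's English description precedes it below -/
import Mathlib

section
/- Lemma 3.2 (spin cocycle computation): In the Clifford algebra $\mathrm{Cl}(Q)$, for every pair $i\neq j$ with $m_{ij}<\infty$ one has $\big(\iota(e_i)\,\iota(e_j)\big)^{m_{ij}}=(-1)^{m_{ij}+1}$. (This is the computation showing that the spin 2-cocycle $\psi_{\mathrm{spin}}$ of $W_+$ corresponds to the parameter point $t_{ij}=1$ for all $i,j$.) -/
/-!
Lemma 3.2 (spin cocycle computation). Let `M` be a Coxeter matrix on a finite index set `I`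
(Mathlib's convention: `M i j = 0` encodes `m_{ij} = ∞`). Let `V = I → ℝ` with the symmetric
bilinear form `B(e_i, e_j) = -cos (π / m_{ij})` (note that this gives `B(e_i,e_i) = -cos π = 1`
on the diagonal since `m_{ii} = 1`, and `-cos 0 = -1` for `m_{ij} = ∞`, matching the convention
`π/∞ = 0`; in Lean, `π / 0 = 0`). Let `Q` be the associated quadratic form and `Cl(Q)` its
Clifford algebra with canonical map `ι`. Then for `i ≠ j` with `m_{ij} < ∞`,
`(ι(e_i) * ι(e_j)) ^ m_{ij} = (-1) ^ (m_{ij} + 1)`.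
-/

noncomputable section

open Real

/-- The Gram matrix of the canonical bilinear form of a Coxeter matrix:
`G i j = -cos (π / m_{ij})`. -/
def coxeterGram {I : Type*} (M : CoxeterMatrix I) : Matrix I I ℝ :=
  fun i j => -Real.cos (Real.pi / (M i j : ℝ))

/-- The canonical quadratic form `Q(v) = B(v,v)` associated to a Coxeter matrix. -/
def coxeterQF {I : Type*} [Fintype I] [DecidableEq I] (M : CoxeterMatrix I) :
    QuadraticForm ℝ (I → ℝ) :=
  LinearMap.BilinMap.toQuadraticMap (Matrix.toBilin' (coxeterGram M))

/-- Chebyshev-style induction in any real algebra. -/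
lemma aux_pow {A : Type*} [Ring A] [Algebra ℝ A] (x : A) (θ : ℝ)
    (hx : x * x = (-(2 * Real.cos θ)) • x - 1) (n : ℕ) :
    Real.sin θ • x ^ (n + 1) =
      ((-1 : ℝ) ^ n * Real.sin ((n + 1) * θ)) • x
        + algebraMap ℝ A ((-1 : ℝ) ^ n * Real.sin (n * θ)) := by
  induction n with
  | zero => simp
  | succ n ih =>
    have h1 : Real.sin θ • x ^ (n + 1 + 1) = (Real.sin θ • x ^ (n + 1)) * x := by
      rw [smul_mul_assoc, ← pow_succ]
    have key : (-1 : ℝ) ^ (n + 1) * Real.sin (((n:ℝ) + 1 + 1) * θ)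
        = (-1:ℝ)^n * Real.sin (((n:ℝ)+1)*θ) * (-(2 * Real.cos θ)) + (-1:ℝ)^n * Real.sin ((n:ℝ)*θ) := by
      have e1 : ((n:ℝ) + 1 + 1) * θ = ((n:ℝ)+1)*θ + θ := by ring
      have e2 : ((n:ℝ)) * θ = ((n:ℝ)+1)*θ - θ := by ring
      rw [e1, e2, Real.sin_add, Real.sin_sub]
      ring
    rw [h1, ih, add_mul, smul_mul_assoc, hx]
    simp only [Algebra.algebraMap_eq_smul_one, smul_mul_assoc, one_mul]
    push_cast at key ⊢
    rw [key]
    module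

theorem spin_cocycle_computation {I : Type*} [Fintype I] [DecidableEq I]
    (M : CoxeterMatrix I) (i j : I) (hij : i ≠ j) (hfin : M i j ≠ 0) :
    (CliffordAlgebra.ι (coxeterQF M) (Pi.single i 1) *
      CliffordAlgebra.ι (coxeterQF M) (Pi.single j 1)) ^ (M i j)
      = (-1 : CliffordAlgebra (coxeterQF M)) ^ (M i j + 1) := by
  set Q := coxeterQF M with hQ
  set a := CliffordAlgebra.ι Q (Pi.single i (1:ℝ)) with ha
  set b := CliffordAlgebra.ι Q (Pi.single j (1:ℝ)) with hb
  obtain ⟨k, hk⟩ : ∃ k, M i j = k + 2 := by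
    have h1 := M.off_diagonal i j hij
    rcases Nat.exists_eq_add_of_lt (show 1 < M i j by omega) with ⟨k, hk⟩
    exact ⟨k, by omega⟩
  set θ := Real.pi / (M i j : ℝ) with hθ
  have hQi : Q (Pi.single i (1:ℝ)) = 1 := by
    simp [hQ, coxeterQF, LinearMap.BilinMap.toQuadraticMap_apply, coxeterGram, M.diagonal]
  have hQj : Q (Pi.single j (1:ℝ)) = 1 := by
    simp [hQ, coxeterQF, LinearMap.BilinMap.toQuadraticMap_apply, coxeterGram, M.diagonal]
  have haa : a * a = 1 := by rw [ha, CliffordAlgebra.ι_sq_scalar, hQi, map_one]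
  have hbb : b * b = 1 := by rw [hb, CliffordAlgebra.ι_sq_scalar, hQj, map_one]
  have hpolar : QuadraticMap.polar Q (Pi.single i (1:ℝ)) (Pi.single j 1) = -(2 * Real.cos θ) := by
    rw [hQ, coxeterQF, LinearMap.BilinMap.polar_toQuadraticMap]
    simp only [Matrix.toBilin'_single, coxeterGram, M.symmetric j i, hθ]
    ring
  have hba : b * a = algebraMap ℝ _ (-(2 * Real.cos θ)) - a * b := by
    rw [← hpolar, eq_sub_iff_add_eq, add_comm]
    exact CliffordAlgebra.ι_mul_ι_add_swap _ _
  have hx : (a * b) * (a * b) = (-(2 * Real.cos θ)) • (a * b) - 1 := by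
    calc (a*b)*(a*b) = a * (b*a) * b := by noncomm_ring
    _ = a * algebraMap ℝ _ (-(2 * Real.cos θ)) * b - a*a*(b*b) := by rw [hba]; noncomm_ring
    _ = (-(2 * Real.cos θ)) • (a * b) - 1 := by
        rw [haa, hbb, Algebra.algebraMap_eq_smul_one, mul_smul_comm, smul_mul_assoc, mul_one,
          one_mul]
  have hmain := aux_pow (a * b) θ hx (k + 1)
  have hne : ((k:ℝ) + 2) ≠ 0 := by positivity
  have hsin2 : Real.sin (((k:ℝ) + 1 + 1) * θ) = 0 := by
    rw [hθ, hk]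
    push_cast
    rw [show ((k:ℝ)+1+1) = (k:ℝ)+2 from by ring, mul_div_cancel₀ _ hne]
    exact Real.sin_pi
  have hsin1 : Real.sin (((k:ℝ) + 1) * θ) = Real.sin θ := by
    have : ((k:ℝ) + 1) * θ = Real.pi - θ := by
      rw [hθ, hk]; push_cast; field_simp; ring
    rw [this, Real.sin_pi_sub]
  have hθpos : 0 < θ := by
    rw [hθ, hk]; push_cast; positivity
  have hθlt : θ < Real.pi := by
    rw [hθ, hk]; push_cast
    calc Real.pi / ((k:ℝ) + 2) ≤ Real.pi / 2 := by
          apply div_le_div_of_nonneg_left Real.pi_pos.le two_pos; linarith [Nat.cast_nonneg (α := ℝ) k]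
    _ < Real.pi := by linarith [Real.pi_gt_three]
  have hsne : Real.sin θ ≠ 0 := (Real.sin_pos_of_pos_of_lt_pi hθpos hθlt).ne'
  rw [hk]
  push_cast at hmain
  rw [hsin2, hsin1, mul_zero, zero_smul, zero_add] at hmain
  have hpow : (-1 : CliffordAlgebra Q) ^ (k + 2 + 1) = (-1) ^ (k + 1) := by
    rw [show k + 2 + 1 = (k + 1) + 1 + 1 by ring, pow_succ, pow_succ, mul_assoc]; simp
  refine smul_right_injective (CliffordAlgebra Q) hsne (hmain.trans ?_)
  show ((-1 : CliffordAlgebra Q) ^ (k + 1)) * algebraMap ℝ _ (Real.sin θ)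
      = Real.sin θ • ((-1 : CliffordAlgebra Q) ^ (k + 2 + 1))
  rw [Algebra.smul_def, ← Algebra.commutes, hpow]
end
end

section
/- Lemma 7.1(i): In the free unital associative $\mathbb{C}$-algebra on generators $(s_i)_{i\in I}$, the two-sided ideal generated by $\{s_i^2-1 : i\in I\}\cup\{(s_is_j-1)^{m_{ij}} : i\neq j,\ m_{ij}<\infty\}$ coincides with the two-sided ideal generated by $\{s_i^2-1 : i\in I\}\cup\{(s_i-s_j)^{m_{ij}} : i\neq j,\ m_{ij}<\infty\}$. Equivalently, the algebra $A_1$ is presented by the relations $s_i^2=1$ and $(s_i-s_j)^{m_{ij}}=0$ ($m_{ij}<\infty$). (The key identity: if $a^2=b^2=1$ in a unital ring, then $(a-b)^{m}=\pm(ab-1)^{m}\,w$ for an invertible alternating word $w$, so $(ab-1)^m=0$ iff $(a-b)^m=0$.) -/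
/-!
Lemma 7.1(i). Let `M` be a Coxeter matrix on a finite set `I` (Mathlib's convention:
`M i j = 0` encodes `m_{ij} = ∞`). In the free unital associative `ℂ`-algebra on generators
`s_i`, the two-sided ideal generated by `{s_i^2 - 1} ∪ {(s_i s_j - 1)^{m_{ij}} : i ≠ j, m_{ij} < ∞}`
coincides with the two-sided ideal generated by
`{s_i^2 - 1} ∪ {(s_i - s_j)^{m_{ij}} : i ≠ j, m_{ij} < ∞}`.
-/

noncomputable section

open FreeAlgebra

section Aux

variable {R : Type*} [Ring R]

private lemma swap_lemma (a b : R) (ha : a * a = 1) (hb : b * b = 1) :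
    ∀ m : ℕ,
      ((a - b) ^ m * a = a * (a - b) ^ m ∧ (a - b) ^ m * b = b * (a - b) ^ m) ∨
      ((a - b) ^ m * a = -(b * (a - b) ^ m) ∧ (a - b) ^ m * b = -(a * (a - b) ^ m)) := by
  have hda : (a - b) * a = -(b * (a - b)) := by
    simp only [sub_mul, mul_sub, ha, hb, neg_sub]
  have hdb : (a - b) * b = -(a * (a - b)) := by
    simp only [sub_mul, mul_sub, ha, hb, neg_sub]
  intro m
  induction m with
  | zero => left; simp
  | succ n ih =>
    rcases ih with ⟨h1, h2⟩ | ⟨h1, h2⟩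
    · right
      constructor
      · rw [pow_succ, mul_assoc, hda, mul_neg, ← mul_assoc, h2, mul_assoc, ← pow_succ]
      · rw [pow_succ, mul_assoc, hdb, mul_neg, ← mul_assoc, h1, mul_assoc, ← pow_succ]
    · left
      constructor
      · rw [pow_succ, mul_assoc, hda, mul_neg, ← mul_assoc, h2, neg_mul, neg_neg, mul_assoc, ← pow_succ]
      · rw [pow_succ, mul_assoc, hdb, mul_neg, ← mul_assoc, h1, neg_mul, neg_neg, mul_assoc, ← pow_succ]

private lemma key_lemma (a b : R) (ha : a * a = 1) (hb : b * b = 1) (m : ℕ) :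
    ∃ w w' : R, w * w' = 1 ∧ w' * w = 1 ∧ (a * b - 1) ^ m = w * (a - b) ^ m := by
  have hc : a * b - 1 = -(a * (a - b)) := by
    simp only [mul_sub, ha, neg_sub]
  induction m with
  | zero => exact ⟨1, 1, one_mul 1, one_mul 1, by simp⟩
  | succ n ih =>
    obtain ⟨w, w', hww, hw'w, hrep⟩ := ih
    rcases swap_lemma a b ha hb n with ⟨h1, h2⟩ | ⟨h1, h2⟩
    · refine ⟨-(w * a), -(a * w'), ?_, ?_, ?_⟩
      · rw [neg_mul_neg, mul_assoc, ← mul_assoc a a, ha, one_mul, hww]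
      · rw [neg_mul_neg, mul_assoc, ← mul_assoc w' w, hw'w, one_mul, ha]
      · rw [pow_succ, hrep, hc, mul_neg, mul_assoc, ← mul_assoc ((a-b)^n) a, h1,
          neg_mul, mul_assoc, mul_assoc, ← pow_succ, ← mul_assoc]
    · refine ⟨w * b, b * w', ?_, ?_, ?_⟩
      · rw [mul_assoc, ← mul_assoc b b, hb, one_mul, hww]
      · rw [mul_assoc, ← mul_assoc w' w, hw'w, one_mul, hb]
      · rw [pow_succ, hrep, hc, mul_neg, mul_assoc, ← mul_assoc ((a-b)^n) a, h1, neg_mul, mul_neg, neg_neg]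
        simp [mul_assoc, pow_succ]

private lemma mem_iff_quot (J : TwoSidedIdeal R) (x : R) :
    x ∈ J ↔ RingCon.mk' J.ringCon x = 0 := by
  rw [TwoSidedIdeal.mem_iff]
  exact ⟨fun h => (RingCon.eq _).mpr h, fun h => (RingCon.eq _).mp h⟩

end Aux

private lemma crux {I : Type*} (J : TwoSidedIdeal (FreeAlgebra ℂ I)) (i j : I)
    (hii : ι ℂ i * ι ℂ i - 1 ∈ J) (hjj : ι ℂ j * ι ℂ j - 1 ∈ J) (m : ℕ) :
    ((ι ℂ i * ι ℂ j - 1) ^ m ∈ J ↔ (ι ℂ i - ι ℂ j) ^ m ∈ J) := by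
  set π := RingCon.mk' J.ringCon with hπ
  have ha : π (ι ℂ i) * π (ι ℂ i) = 1 := by
    have := (mem_iff_quot J _).mp hii
    rwa [map_sub, map_mul, map_one, sub_eq_zero] at this
  have hb : π (ι ℂ j) * π (ι ℂ j) = 1 := by
    have := (mem_iff_quot J _).mp hjj
    rwa [map_sub, map_mul, map_one, sub_eq_zero] at this
  obtain ⟨w, w', hww, hw'w, hrep⟩ := key_lemma (π (ι ℂ i)) (π (ι ℂ j)) ha hb m
  rw [mem_iff_quot J, mem_iff_quot J, map_pow, map_pow, map_sub, map_sub, map_mul, map_one]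
  constructor
  · intro h
    have : (π (ι ℂ i) - π (ι ℂ j)) ^ m = w' * ((π (ι ℂ i) * π (ι ℂ j) - 1) ^ m) := by
      rw [hrep, ← mul_assoc, hw'w, one_mul]
    rw [this, h, mul_zero]
  · intro h
    rw [hrep, h, mul_zero]

theorem lemma_7_1_i {I : Type*} [Fintype I] (M : CoxeterMatrix I) :
    TwoSidedIdeal.span
        ({x : FreeAlgebra ℂ I | ∃ i : I, x = ι ℂ i * ι ℂ i - 1} ∪
         {x : FreeAlgebra ℂ I | ∃ i j : I, i ≠ j ∧ M i j ≠ 0 ∧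
            x = (ι ℂ i * ι ℂ j - 1) ^ (M i j)})
      =
    TwoSidedIdeal.span
        ({x : FreeAlgebra ℂ I | ∃ i : I, x = ι ℂ i * ι ℂ i - 1} ∪
         {x : FreeAlgebra ℂ I | ∃ i j : I, i ≠ j ∧ M i j ≠ 0 ∧
            x = (ι ℂ i - ι ℂ j) ^ (M i j)}) := by
  have hsq : ∀ (T : Set (FreeAlgebra ℂ I)) (k : I),
      ι ℂ k * ι ℂ k - 1 ∈ TwoSidedIdeal.span
        ({x : FreeAlgebra ℂ I | ∃ i : I, x = ι ℂ i * ι ℂ i - 1} ∪ T) :=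
    fun T k => TwoSidedIdeal.subset_span (Or.inl ⟨k, rfl⟩)
  apply le_antisymm
  · intro x hx
    refine TwoSidedIdeal.mem_span_iff.mp hx _ ?_
    rintro y (⟨i, rfl⟩ | ⟨i, j, hij, hm, rfl⟩)
    · exact hsq _ i
    · exact (crux _ i j (hsq _ i) (hsq _ j) (M i j)).mpr
        (TwoSidedIdeal.subset_span (Or.inr ⟨i, j, hij, hm, rfl⟩))
  · intro x hx
    refine TwoSidedIdeal.mem_span_iff.mp hx _ ?_
    rintro y (⟨i, rfl⟩ | ⟨i, j, hij, hm, rfl⟩)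
    · exact hsq _ i
    · exact (crux _ i j (hsq _ i) (hsq _ j) (M i j)).mp
        (TwoSidedIdeal.subset_span (Or.inr ⟨i, j, hij, hm, rfl⟩))
end
end

section
/- Lemma 7.1(ii): In the free unital associative $\mathbb{C}$-algebra on generators $(s_i)_{i\in I}$, the two-sided ideal generated by $\{s_i^2 : i\in I\}\cup\{\pi_{m_{ij}}(s_i,s_j)-(-1)^{m_{ij}+1}\pi_{m_{ij}}(s_j,s_i) : i\neq j,\ m_{ij}<\infty\}$ coincides with the two-sided ideal generated by $\{s_i^2 : i\in I\}\cup\{(s_i-s_j)^{m_{ij}} : i\neq j,\ m_{ij}<\infty\}$. Equivalently, the algebra $\overline{A}_1$ is presented by the relations $s_i^2=0$ and $(s_i-s_j)^{m_{ij}}=0$ ($m_{ij}<\infty$). (The key identity: if $a^2=b^2=0$ in a ring, then $(a-b)^m=(-1)^{m/2}\big((ab)^{m/2}+(ba)^{m/2}\big)$ for $m$ even and $(a-b)^m=(-1)^{(m-1)/2}\big((ab)^{(m-1)/2}a-(ba)^{(m-1)/2}b\big)$ for $m$ odd.) -/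
/-!
Lemma 7.1(ii). Let `M` be a Coxeter matrix on a finite set `I` (Mathlib's convention:
`M i j = 0` encodes `m_{ij} = ∞`). For ring elements `x y` let `π_m(x,y) = xyxy⋯` (exactly `m`
factors, starting with `x`). In the free unital associative `ℂ`-algebra on generators `s_i`,
the two-sided ideal generated by
`{s_i^2} ∪ {π_{m_{ij}}(s_i,s_j) - (-1)^{m_{ij}+1} π_{m_{ij}}(s_j,s_i) : i ≠ j, m_{ij} < ∞}`
coincides with the two-sided ideal generated by
`{s_i^2} ∪ {(s_i - s_j)^{m_{ij}} : i ≠ j, m_{ij} < ∞}`.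
-/

noncomputable section

open FreeAlgebra

/-- The alternating product `x * y * x * y * ⋯` with exactly `m` factors, starting with `x`. -/
def altProd {A : Type*} [Monoid A] (x y : A) : ℕ → A
  | 0 => 1
  | m + 1 => x * altProd y x m

lemma altProd_succ {A : Type*} [Monoid A] (x y : A) (m : ℕ) :
    altProd x y (m + 1) = x * altProd y x m := rfl

lemma altProd_absorb {R : Type*} [Ring R] (a b : R) (ha : a * a = 0) {m : ℕ} (hm : 1 ≤ m) :
    a * altProd a b m = 0 := by
  cases m with
  | zero => omega
  | succ k => rw [altProd_succ, ← mul_assoc, ha, zero_mul]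

lemma key {R : Type*} [Ring R] (a b : R) (ha : a * a = 0) (hb : b * b = 0) {m : ℕ} (hm : 1 ≤ m) :
    (a - b) ^ m = (-1 : R) ^ (m / 2) * (altProd a b m + (-1 : R) ^ m * altProd b a m) := by
  induction m, hm using Nat.le_induction with
  | base => simp [altProd, sub_eq_add_neg]
  | succ m hm ih =>
    have h1 : a * altProd a b m = 0 := altProd_absorb a b ha hm
    have h2 : b * altProd b a m = 0 := altProd_absorb b a hb hm
    have hab : a * altProd b a m = altProd a b (m + 1) := rfl
    have hba : b * altProd a b m = altProd b a (m + 1) := rfl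
    rw [pow_succ', ih]
    rcases Nat.even_or_odd m with ⟨k, hk⟩ | ⟨k, hk⟩
    · have e1 : m / 2 = k := by omega
      have e2 : (m + 1) / 2 = k := by omega
      have e3 : (-1 : R) ^ m = 1 := Even.neg_one_pow ⟨k, hk⟩
      have e4 : (-1 : R) ^ (m + 1) = -1 := Odd.neg_one_pow ⟨k, by omega⟩
      have hc : ((-1 : R) ^ k) * (a - b) = (a - b) * ((-1 : R) ^ k) :=
        ((Commute.neg_one_left (a - b)).pow_left k).eq
      rw [e1, e2, e3, e4, ← mul_assoc, ← hc, mul_assoc]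
      congr 1
      rw [one_mul, sub_mul, mul_add, mul_add, h1, h2, hab, hba, neg_one_mul]
      abel
    · have e1 : m / 2 = k := by omega
      have e2 : (m + 1) / 2 = k + 1 := by omega
      have e3 : (-1 : R) ^ m = -1 := Odd.neg_one_pow ⟨k, hk⟩
      have e4 : (-1 : R) ^ (m + 1) = 1 := Even.neg_one_pow ⟨k + 1, by omega⟩
      have hc : ((-1 : R) ^ k) * (a - b) = (a - b) * ((-1 : R) ^ k) :=
        ((Commute.neg_one_left (a - b)).pow_left k).eq
      rw [e1, e2, e3, e4, pow_succ, ← mul_assoc, ← hc, mul_assoc, mul_assoc]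
      congr 1
      rw [one_mul, sub_mul, mul_add, mul_add, neg_one_mul, mul_neg, mul_neg, h1, h2, hab, hba,
        neg_one_mul, neg_zero]
      abel

/-- Membership equivalence for the two kinds of generators, in any two-sided ideal
containing the squares. -/
lemma gen_mem_iff {R : Type*} [Ring R] (J : TwoSidedIdeal R) (a b : R)
    (ha : a * a ∈ J) (hb : b * b ∈ J) {m : ℕ} (hm : 1 ≤ m) :
    (altProd a b m - (-1 : R) ^ (m + 1) * altProd b a m ∈ J ↔ (a - b) ^ m ∈ J) := by
  set c := J.ringCon with hc
  have hmem : ∀ x : R, x ∈ J ↔ (x : c.Quotient) = 0 := by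
    intro x
    rw [show (0 : c.Quotient) = ((0 : R) : c.Quotient) from rfl, RingCon.eq]
    exact Iff.rfl
  have hqa : (a : c.Quotient) * a = 0 := by rw [← RingCon.coe_mul, ← hmem]; exact ha
  have hqb : (b : c.Quotient) * b = 0 := by rw [← RingCon.coe_mul, ← hmem]; exact hb
  have haltmap : ∀ (n : ℕ) (x y : R),
      ((altProd x y n : R) : c.Quotient) = altProd (x : c.Quotient) (y : c.Quotient) n := by
    intro n
    induction n with
    | zero => intro x y; exact RingCon.coe_one c
    | succ k ihn => intro x y; rw [altProd_succ, RingCon.coe_mul, ihn, altProd_succ]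
  have hk := key (a : c.Quotient) (b : c.Quotient) hqa hqb hm
  rw [hmem, hmem]
  push_cast [haltmap]
  have hp : (-1 : c.Quotient) ^ (m + 1) = -((-1 : c.Quotient) ^ m) := by
    rw [pow_succ, mul_neg_one]
  constructor
  · intro h
    rw [hp, neg_mul, sub_neg_eq_add] at h
    rw [hk, h, mul_zero]
  · intro h
    rw [hk, neg_one_pow_mul_eq_zero_iff] at h
    rw [hp, neg_mul, sub_neg_eq_add]
    exact h

theorem lemma_7_1_ii {I : Type*} [Fintype I] (M : CoxeterMatrix I) :
    TwoSidedIdeal.span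
        ({x : FreeAlgebra ℂ I | ∃ i : I, x = ι ℂ i * ι ℂ i} ∪
         {x : FreeAlgebra ℂ I | ∃ i j : I, i ≠ j ∧ M i j ≠ 0 ∧
            x = altProd (ι ℂ i) (ι ℂ j) (M i j)
                  - (-1 : FreeAlgebra ℂ I) ^ (M i j + 1) * altProd (ι ℂ j) (ι ℂ i) (M i j)})
      =
    TwoSidedIdeal.span
        ({x : FreeAlgebra ℂ I | ∃ i : I, x = ι ℂ i * ι ℂ i} ∪
         {x : FreeAlgebra ℂ I | ∃ i j : I, i ≠ j ∧ M i j ≠ 0 ∧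
            x = (ι ℂ i - ι ℂ j) ^ (M i j)}) := by
  apply le_antisymm
  · intro x hx
    rw [TwoSidedIdeal.mem_span_iff] at hx
    apply hx
    rintro y (⟨i, rfl⟩ | ⟨i, j, hij, hm, rfl⟩)
    · exact TwoSidedIdeal.subset_span (Or.inl ⟨i, rfl⟩)
    · refine (gen_mem_iff _ (ι ℂ i) (ι ℂ j) ?_ ?_ (Nat.one_le_iff_ne_zero.mpr hm)).mpr ?_
      · exact TwoSidedIdeal.subset_span (Or.inl ⟨i, rfl⟩)
      · exact TwoSidedIdeal.subset_span (Or.inl ⟨j, rfl⟩)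
      · exact TwoSidedIdeal.subset_span (Or.inr ⟨i, j, hij, hm, rfl⟩)
  · intro x hx
    rw [TwoSidedIdeal.mem_span_iff] at hx
    apply hx
    rintro y (⟨i, rfl⟩ | ⟨i, j, hij, hm, rfl⟩)
    · exact TwoSidedIdeal.subset_span (Or.inl ⟨i, rfl⟩)
    · refine (gen_mem_iff _ (ι ℂ i) (ι ℂ j) ?_ ?_ (Nat.one_le_iff_ne_zero.mpr hm)).mp ?_
      · exact TwoSidedIdeal.subset_span (Or.inl ⟨i, rfl⟩)
      · exact TwoSidedIdeal.subset_span (Or.inl ⟨j, rfl⟩)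
      · exact TwoSidedIdeal.subset_span (Or.inr ⟨i, j, hij, hm, rfl⟩)
end
end
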